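/- Let f be a nonnegative trigonometric polynomial, g ≥ 2 an integer, and let p be a trigonometric polynomial satisfying the TGM condition (i) at every zero of f and the TGM condition (ii) globally. Let f̂(x) = (1/g) Σ_{y ∈ Ω_g(x/g)} f(y)|p(y)|². If x₀ ∈ [0,2π) is a zero of f, then y₀ = g·x₀ (mod 2π) is a zero of f̂. -/

import Mathlib

/-!
Write `y₀ = g x₀ + 2πm`. The corners of `Ω_g(y₀/g)` are the points `x₀ + 2π(m+j)/g`, which are
`x₀` or a mirror point `x₀ + 2πr/g` (`1 ≤ r < g`) modulo `2π`. At `x₀` the factor `f` vanishes.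
At a mirror point, `p² = (p²/f) · f` tends to `L · 0 = 0` as `x → x₀` through the nonzeros of `f`,
so `p` vanishes there by continuity. This limit argument needs `x₀` to be a limit of nonzeros of
`f`; otherwise `f` vanishes near `x₀`, hence everywhere, being real analytic.
-/

open Complex Filter Topology

noncomputable section

/-- A real-valued function is a trigonometric polynomial: a finite sum `∑_{|j|≤c} a_j e^{ijx}`. -/
def IsTrigPolyR (f : ℝ → ℝ) : Prop :=
  ∃ (c : ℕ) (a : ℤ → ℂ), ∀ x : ℝ,
    (f x : ℂ) = ∑ j ∈ Finset.Icc (-(c : ℤ)) (c : ℤ), a j * Complex.exp (Complex.I * (j : ℂ) * (x : ℂ))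

/-- TGM condition (i): for every zero `x₀` of `f` (in `[0,2π)`), for each `k = 1,…,g−1`,
`lim_{x→x₀} p(x + 2πk/g)² / f(x)` exists finite. -/
def TGMCondOne (f p : ℝ → ℝ) (g : ℕ) : Prop :=
  ∀ x₀ ∈ Set.Ico (0 : ℝ) (2 * Real.pi), f x₀ = 0 →
    ∀ j : ℕ, 1 ≤ j → j < g →
      ∃ L : ℝ,
        Filter.Tendsto (fun x : ℝ => (p (x + 2 * Real.pi * (j : ℝ) / (g : ℝ)))^2 / f x)
          (nhdsWithin x₀ {x : ℝ | f x ≠ 0}) (nhds L)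

/-- TGM condition (ii): `∑_{y ∈ Ω_g(x)} p(y)² > 0` for all `x ∈ [0,2π)`. -/
def TGMCondTwo (p : ℝ → ℝ) (g : ℕ) : Prop :=
  ∀ x ∈ Set.Ico (0 : ℝ) (2 * Real.pi),
    0 < ∑ j ∈ Finset.range g, (p (x + 2 * Real.pi * (j : ℝ) / (g : ℝ)))^2

/-- The projected symbol `f̂(x) = (1/g) ∑_{y ∈ Ω_g(x/g)} f(y) |p(y)|²`. -/
def projSymbol (g : ℕ) (f p : ℝ → ℝ) : ℝ → ℝ := fun x =>
  ((g : ℝ))⁻¹ *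
    ∑ j ∈ Finset.range g,
      f ((x + 2 * Real.pi * (j : ℝ)) / (g : ℝ)) * (p ((x + 2 * Real.pi * (j : ℝ)) / (g : ℝ)))^2

namespace IsTrigPolyR

variable {f : ℝ → ℝ}

theorem analyticAt (hf : IsTrigPolyR f) (x : ℝ) : AnalyticAt ℝ f x := by
  obtain ⟨c, a, hfa⟩ := hf
  set F : ℂ → ℂ := fun z => ∑ j ∈ Finset.Icc (-(c : ℤ)) c, a j * Complex.exp (Complex.I * j * z)
  have hF : AnalyticAt ℂ F x := by fun_prop
  have hf_eq : f = fun x : ℝ => reCLM (F (ofRealCLM x)) := by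
    funext x
    simp [F, ← hfa]
  rw [hf_eq]
  exact reCLM.analyticAt _ |>.comp (hF.restrictScalars.comp (ofRealCLM.analyticAt x))

theorem analyticOnNhd (hf : IsTrigPolyR f) : AnalyticOnNhd ℝ f Set.univ :=
  fun x _ => hf.analyticAt x

theorem continuous (hf : IsTrigPolyR f) : Continuous f :=
  hf.analyticOnNhd.continuous

theorem periodic (hf : IsTrigPolyR f) : Function.Periodic f (2 * Real.pi) := by
  obtain ⟨c, a, hfa⟩ := hf
  intro x
  apply Complex.ofReal_injective
  rw [hfa, hfa]
  refine Finset.sum_congr rfl fun j _ => ?_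
  have : Complex.I * j * ((x + 2 * Real.pi : ℝ) : ℂ) =
      Complex.I * j * x + j * (2 * Real.pi * Complex.I) := by
    push_cast
    ring
  rw [this, Complex.exp_add, Complex.exp_int_mul_two_pi_mul_I, mul_one]

theorem eq_zero_of_eventuallyEq_zero (hf : IsTrigPolyR f) {x₀ : ℝ} (h : f =ᶠ[𝓝 x₀] 0) : f = 0 :=
  hf.analyticOnNhd.eq_of_eventuallyEq analyticOnNhd_const h

end IsTrigPolyR

theorem exists_lt_mul_div_eq_add_int_mul (T : ℝ) (n : ℤ) {g : ℕ} (hg : 0 < g) :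
    ∃ r < g, ∃ q : ℤ, T * n / g = T * r / g + q * T := by
  have hgz : (g : ℤ) ≠ 0 := by exact_mod_cast hg.ne'
  obtain ⟨r, hr⟩ := Int.eq_ofNat_of_zero_le (Int.emod_nonneg n hgz)
  have hrg : n % g < g := Int.emod_lt_of_pos n (by exact_mod_cast hg)
  refine ⟨r, by omega, n / g, ?_⟩
  have hn : (n : ℝ) = g * (n / g : ℤ) + r := by
    exact_mod_cast hr ▸ (Int.mul_ediv_add_emod n g).symm
  rw [hn]
  field_simp
  ring

theorem eq_zero_of_tendsto_div_nhdsWithin {α : Type*} [TopologicalSpace α] {f q : α → ℝ}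
    {x₀ : α} {L : ℝ} (hf : ContinuousAt f x₀) (hq : ContinuousAt q x₀) (hfx₀ : f x₀ = 0)
    [(𝓝[{x | f x ≠ 0}] x₀).NeBot]
    (hL : Tendsto (fun x => q x / f x) (𝓝[{x | f x ≠ 0}] x₀) (𝓝 L)) : q x₀ = 0 := by
  have hf0 : Tendsto f (𝓝[{x | f x ≠ 0}] x₀) (𝓝 0) :=
    hfx₀ ▸ hf.tendsto.mono_left nhdsWithin_le_nhds
  have hq0 : Tendsto q (𝓝[{x | f x ≠ 0}] x₀) (𝓝 0) := by
    refine (mul_zero L ▸ hL.mul hf0).congr' ?_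
    filter_upwards [self_mem_nhdsWithin] with x hx
    exact div_mul_cancel₀ _ hx
  exact tendsto_nhds_unique (hq.tendsto.mono_left nhdsWithin_le_nhds) hq0

theorem TGMCondOne.mirror_eq_zero {f p : ℝ → ℝ} {g : ℕ} (hc1 : TGMCondOne f p g)
    (hf : Continuous f) (hp : Continuous p) {x₀ : ℝ} (hx₀ : x₀ ∈ Set.Ico 0 (2 * Real.pi))
    (hzero : f x₀ = 0) (hacc : ∃ᶠ x in 𝓝 x₀, f x ≠ 0) {j : ℕ} (hj : 1 ≤ j) (hjg : j < g) :
    p (x₀ + 2 * Real.pi * j / g) = 0 := by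
  have : (𝓝[{x | f x ≠ 0}] x₀).NeBot :=
    mem_closure_iff_nhdsWithin_neBot.mp (mem_closure_iff_frequently.mpr hacc)
  obtain ⟨L, hL⟩ := hc1 x₀ hx₀ hzero j hj hjg
  exact pow_eq_zero_iff two_ne_zero |>.mp <|
    eq_zero_of_tendsto_div_nhdsWithin (q := fun x => p (x + 2 * Real.pi * j / g) ^ 2)
      hf.continuousAt (by fun_prop) hzero hL

theorem projSymbol_zero_of_zero_general (g : ℕ)
    (f p : ℝ → ℝ) (hf : IsTrigPolyR f) (hp : IsTrigPolyR p)
    (hc1 : TGMCondOne f p g)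
    (x₀ : ℝ) (hx₀ : x₀ ∈ Set.Ico (0 : ℝ) (2 * Real.pi)) (hzero : f x₀ = 0) :
    ∀ y₀ : ℝ, (∃ m : ℤ, y₀ = (g : ℝ) * x₀ + 2 * Real.pi * (m : ℝ)) →
      projSymbol g f p y₀ = 0 := by
  rintro y₀ ⟨m, rfl⟩
  by_cases hloc : f =ᶠ[𝓝 x₀] 0
  · simp [projSymbol, hf.eq_zero_of_eventuallyEq_zero hloc]
  refine mul_eq_zero_of_right _ (Finset.sum_eq_zero fun j hj => ?_)
  have hgj : 0 < g := (Nat.zero_le j).trans_lt (Finset.mem_range.mp hj)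
  obtain ⟨r, hrg, q, hq⟩ := exists_lt_mul_div_eq_add_int_mul (2 * Real.pi) (m + j) hgj
  have hcorner : (g * x₀ + 2 * Real.pi * m + 2 * Real.pi * j) / g =
      x₀ + 2 * Real.pi * r / g + q * (2 * Real.pi) := by
    rw [add_assoc x₀, ← hq]
    push_cast
    field_simp
    ring
  rw [hcorner, hf.periodic.int_mul q, hp.periodic.int_mul q]
  rcases Nat.eq_zero_or_pos r with rfl | hr
  · simp [hzero]
  · rw [hc1.mirror_eq_zero hf.continuous hp.continuous hx₀ hzero (Filter.not_eventually.mp hloc)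
      hr hrg]
    ring

theorem projSymbol_zero_of_zero (g : ℕ) (hg : 2 ≤ g)
    (f p : ℝ → ℝ) (hf : IsTrigPolyR f) (hf0 : ∀ x, 0 ≤ f x) (hp : IsTrigPolyR p)
    (hc1 : TGMCondOne f p g) (hc2 : TGMCondTwo p g)
    (x₀ : ℝ) (hx₀ : x₀ ∈ Set.Ico (0 : ℝ) (2 * Real.pi)) (hzero : f x₀ = 0) :
    ∀ y₀ : ℝ, (∃ m : ℤ, y₀ = (g : ℝ) * x₀ + 2 * Real.pi * (m : ℝ)) →
      projSymbol g f p y₀ = 0 :=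
  projSymbol_zero_of_zero_general g f p hf hp hc1 x₀ hx₀ hzero
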